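/- arXiv:1709.02910 — 8 statements merged into one kernel-verified Lean document; each statement's English description precedes it below -/
import Mathlib

section
/- For a monotone submodular function f: 2^E → ℝ≥0 with f(∅)=0, the function g(X) := f(X) - Σ_{i∈X} f(i | E∖{i}) is monotone and submodular. -/
/-! The marginal value `f(i | X)` decreases as `X` grows, and `f(i | E ∖ {i})` is its smallest
value; subtracting this modular function leaves every marginal value nonnegative, while submodularity
is unaffected by modular terms. -/

open Finset

def Submodular {E : Type*} [DecidableEq E] (f : Finset E → ℝ) : Prop :=
  ∀ X Y : Finset E, f (X ∩ Y) + f (X ∪ Y) ≤ f X + f Y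

def MonotoneSF {E : Type*} (f : Finset E → ℝ) : Prop :=
  ∀ X Y : Finset E, X ⊆ Y → f X ≤ f Y

section

variable {E : Type*} [DecidableEq E]

theorem MonotoneSF.of_le_insert {g : Finset E → ℝ}
    (h : ∀ X i, i ∉ X → g X ≤ g (insert i X)) : MonotoneSF g :=
  fun _ _ hXY => Finset.monotone_iff_forall_le_insert.mpr h hXY

theorem Submodular.sub_sum {f : Finset E → ℝ} (hf : Submodular f) (w : E → ℝ) :
    Submodular (fun X => f X - ∑ i ∈ X, w i) := by
  intro X Y
  have hsum : ∑ i ∈ X ∪ Y, w i + ∑ i ∈ X ∩ Y, w i = ∑ i ∈ X, w i + ∑ i ∈ Y, w i :=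
    sum_union_inter
  linarith [hf X Y]

theorem Submodular.marginal_antitone {f : Finset E → ℝ} (hf : Submodular f) {X Y : Finset E}
    {i : E} (hXY : X ⊆ Y) (hiY : i ∉ Y) :
    f (insert i Y) - f Y ≤ f (insert i X) - f X := by
  have hinter : insert i X ∩ Y = X := by
    rw [insert_inter_of_notMem hiY, inter_eq_left.mpr hXY]
  have hunion : insert i X ∪ Y = insert i Y := by
    rw [insert_union, union_eq_right.mpr hXY]
  linarith [hinter ▸ hunion ▸ hf (insert i X) Y]

theorem Submodular.marginal_univ_le [Fintype E] {f : Finset E → ℝ} (hf : Submodular f)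
    {X : Finset E} {i : E} (hi : i ∉ X) :
    f univ - f (univ.erase i) ≤ f (insert i X) - f X := by
  have hX : X ⊆ univ.erase i := fun x hx => mem_erase.mpr ⟨ne_of_mem_of_not_mem hx hi, mem_univ x⟩
  simpa [insert_erase (mem_univ i)] using hf.marginal_antitone hX (notMem_erase i univ)

end

theorem difficult_part_monotone_submodular_general {E : Type*} [DecidableEq E] [Fintype E]
    (f : Finset E → ℝ) (hsub : Submodular f) :
    MonotoneSF (fun X => f X - ∑ i ∈ X, (f univ - f (univ.erase i))) ∧
    Submodular (fun X => f X - ∑ i ∈ X, (f univ - f (univ.erase i))) := by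
  refine ⟨MonotoneSF.of_le_insert fun X i hi => ?_, hsub.sub_sum _⟩
  simp only [sum_insert hi]
  linarith [hsub.marginal_univ_le hi]

theorem difficult_part_monotone_submodular {E : Type*} [DecidableEq E] [Fintype E]
    (f : Finset E → ℝ) (hmono : MonotoneSF f) (hsub : Submodular f)
    (h0 : f ∅ = 0) (hnonneg : ∀ X : Finset E, 0 ≤ f X) :
    MonotoneSF (fun X => f X - ∑ i ∈ X, (f univ - f (univ.erase i))) ∧
    Submodular (fun X => f X - ∑ i ∈ X, (f univ - f (univ.erase i))) :=
  difficult_part_monotone_submodular_general f hsub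
end

section
/- Every M♮-concave set function is submodular. -/
/-!
Exchanging an element `i ∉ X` between `insert i X` and a subset `Y ⊆ X` leaves no partner
`j ∈ Y \ insert i X`, so M♮-concavity collapses to the diminishing-returns inequality
`f (insert i X) - f X ≤ f (insert i Y) - f Y`. Submodularity follows from it by adding the
elements of `Y \ X` one at a time to both `X ∩ Y` and `X`.
-/

open Finset

/-- A set function is M♮-concave. -/
def MConcave {E : Type*} [DecidableEq E] (f : Finset E → ℝ) : Prop :=
  ∀ X Y : Finset E, ∀ i ∈ X \ Y,
    f X + f Y ≤ f (X.erase i) + f (insert i Y) ∨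
    ∃ j ∈ Y \ X, f X + f Y ≤ f (insert j (X.erase i)) + f ((insert i Y).erase j)

section

variable {E : Type*} [DecidableEq E] {f : Finset E → ℝ}

def HasDiminishingReturns (f : Finset E → ℝ) : Prop :=
  ∀ ⦃X Y : Finset E⦄ ⦃i : E⦄, Y ⊆ X → i ∉ X → f (insert i X) + f Y ≤ f X + f (insert i Y)

theorem MConcave.hasDiminishingReturns (hf : MConcave f) : HasDiminishingReturns f := by
  intro X Y i hYX hiX
  have hi : i ∈ insert i X \ Y := mem_sdiff.mpr ⟨mem_insert_self i X, fun hiY => hiX (hYX hiY)⟩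
  rcases hf (insert i X) Y i hi with h | ⟨j, hj, -⟩
  · rwa [erase_insert hiX] at h
  · exact absurd (mem_insert_of_mem (hYX (mem_sdiff.mp hj).1)) (mem_sdiff.mp hj).2

theorem HasDiminishingReturns.union_add_le_add_union (hf : HasDiminishingReturns f)
    {X Z D : Finset E} (hZX : Z ⊆ X) (hXD : Disjoint X D) :
    f (X ∪ D) + f Z ≤ f X + f (Z ∪ D) := by
  induction D using Finset.induction_on with
  | empty => simp
  | @insert b D hbD ih =>
    rw [disjoint_insert_right] at hXD
    have hbXD : b ∉ X ∪ D := fun h => (mem_union.mp h).elim hXD.1 hbD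
    have gain_b := hf (union_subset_union hZX Subset.rfl) hbXD
    rw [union_insert, union_insert]
    linarith [ih hXD.2]

theorem HasDiminishingReturns.submodular (hf : HasDiminishingReturns f) : Submodular f := by
  intro X Y
  have h := hf.union_add_le_add_union (inter_subset_left : X ∩ Y ⊆ X) (disjoint_sdiff (t := Y))
  have hY : X ∩ Y ∪ Y \ X = Y := by rw [union_comm, inter_comm, sdiff_union_inter]
  rw [union_sdiff_self_eq_union, hY] at h
  linarith

end

theorem mconcave_submodular {E : Type*} [DecidableEq E]
    (f : Finset E → ℝ) (hf : MConcave f) : Submodular f :=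
  hf.hasDiminishingReturns.submodular
end

section
/- Let L be a laminar family on E and for each L ∈ L let φ_L: ℕ → ℝ be concave. Then f(X) := Σ_{L∈L} φ_L(|X ∩ L|) is M♮-concave. -/
/-!
Fix `i ∈ X \ Y`. If `X` is larger than `Y` on every member of `𝓛` containing `i`, moving `i`
from `X` to `Y` decreases no term `φ L #(· ∩ L)`, by concavity. Otherwise laminarity provides
`j ∈ Y \ X` such that on every member containing exactly one of `i`, `j` the set losing that
point is the strictly larger one, so exchanging `i` and `j` decreases no term either.
-/

open Finset

/-- A family of sets is laminar. -/
def Laminar {E : Type*} [DecidableEq E] (𝓛 : Finset (Finset E)) : Prop :=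
  ∀ A ∈ 𝓛, ∀ B ∈ 𝓛, A ⊆ B ∨ B ⊆ A ∨ A ∩ B = ∅

theorem add_le_pred_add_succ_of_concave {g : ℕ → ℝ}
    (hg : ∀ k, g (k + 2) - g (k + 1) ≤ g (k + 1) - g k) {a b : ℕ} (hba : b < a) :
    g a + g b ≤ g (a - 1) + g (b + 1) := by
  obtain ⟨c, rfl⟩ : ∃ c, a = c + 1 := ⟨a - 1, by omega⟩
  have hdiff : Antitone fun k => g (k + 1) - g k := antitone_nat_of_succ_le hg
  have := hdiff (Nat.le_of_lt_succ hba)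
  simp only [Nat.add_sub_cancel] at this ⊢
  linarith

theorem Finset.sdiff_nonempty_of_card_le_of_mem_sdiff {α : Type*} [DecidableEq α]
    {s t : Finset α} {a : α} (hst : #s ≤ #t) (ha : a ∈ s \ t) : (t \ s).Nonempty := by
  by_contra hempty
  have hts : t ⊆ s := sdiff_eq_empty_iff_subset.1 (not_nonempty_iff_eq_empty.1 hempty)
  exact (mem_sdiff.1 ha).2 (eq_of_subset_of_card_le hts hst ▸ (mem_sdiff.1 ha).1)

namespace Laminar

variable {E : Type*} [DecidableEq E] {𝓛 : Finset (Finset E)}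

theorem subset (h𝓛 : Laminar 𝓛) {𝓜 : Finset (Finset E)} (hsub : 𝓜 ⊆ 𝓛) : Laminar 𝓜 :=
  fun A hA B hB => h𝓛 A (hsub hA) B (hsub hB)

theorem pairwiseDisjoint_maximal (h𝓛 : Laminar 𝓛) :
    {A | Maximal (· ∈ 𝓛) A}.PairwiseDisjoint id := by
  intro A hA B hB hAB
  rcases h𝓛 A hA.1 B hB.1 with hle | hle | hdisj
  · exact absurd (hA.eq_of_le hB.1 hle) hAB
  · exact absurd (hB.eq_of_le hA.1 hle).symm hAB
  · exact disjoint_iff_inter_eq_empty.2 hdisj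

/-- Counting is additive over the maximal members, which are disjoint and cover the union. -/
theorem card_inter_sup_le (h𝓛 : Laminar 𝓛) {X Y : Finset E}
    (hXY : ∀ L ∈ 𝓛, #(Y ∩ L) ≤ #(X ∩ L)) : #(Y ∩ 𝓛.sup id) ≤ #(X ∩ 𝓛.sup id) := by
  classical
  set 𝓜 := 𝓛.filter (Maximal (· ∈ 𝓛))
  have hsup : 𝓜.sup id = 𝓛.sup id := by
    refine le_antisymm (sup_mono (filter_subset _ _)) (Finset.sup_le fun A hA => ?_)
    obtain ⟨B, hAB, hB⟩ := 𝓛.exists_le_maximal hA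
    exact hAB.trans (le_sup (f := id) (mem_filter.2 ⟨hB.1, hB⟩))
  have hdisj (Z : Finset E) : (𝓜 : Set (Finset E)).PairwiseDisjoint (Z ∩ ·) :=
    (h𝓛.pairwiseDisjoint_maximal.subset fun A hA => (mem_filter.1 hA).2).mono
      fun _ => inter_subset_right
  simp only [← hsup, sup_eq_biUnion, inter_biUnion, id_eq]
  rw [card_biUnion (hdisj X), card_biUnion (hdisj Y)]
  exact sum_le_sum fun L hL => hXY L (mem_of_mem_filter L hL)

theorem subset_of_mem_inter_of_mem_sdiff (h𝓛 : Laminar 𝓛) {A B : Finset E} (hA : A ∈ 𝓛)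
    (hB : B ∈ 𝓛) {x y : E} (hx : x ∈ A ∩ B) (hy : y ∈ B \ A) : A ⊆ B := by
  rcases h𝓛 A hA B hB with hAB | hBA | hdisj
  · exact hAB
  · exact absurd (hBA (mem_sdiff.1 hy).1) (mem_sdiff.1 hy).2
  · simp [hdisj] at hx

/-- Take `L₀` inclusion-minimal among the members containing `i` on which `X` is not larger
than `Y`, and remove from it the union `B` of the members inside `L₀ \ {i}` on which `Y` is not
larger than `X`. On `L₀ \ B` the set `Y` is still at least as large as `X`, so it contains some
`j ∉ X`; minimality of `L₀` and the choice of `B` give the two inequalities. -/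
theorem exists_exchange (h𝓛 : Laminar 𝓛) {X Y : Finset E} {i : E} (hiX : i ∈ X) (hiY : i ∉ Y)
    (htight : ∃ L ∈ 𝓛, i ∈ L ∧ #(X ∩ L) ≤ #(Y ∩ L)) :
    ∃ j ∈ Y \ X, ∀ L ∈ 𝓛, (i ∈ L → j ∉ L → #(Y ∩ L) < #(X ∩ L)) ∧
      (j ∈ L → i ∉ L → #(X ∩ L) < #(Y ∩ L)) := by
  classical
  obtain ⟨L₀, hL₀⟩ := exists_minimal (s := 𝓛.filter fun L => i ∈ L ∧ #(X ∩ L) ≤ #(Y ∩ L))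
    (by obtain ⟨L, hL, htL⟩ := htight; exact ⟨L, mem_filter.2 ⟨hL, htL⟩⟩)
  obtain ⟨hL₀𝓛, hiL₀, hXYL₀⟩ := mem_filter.1 hL₀.1
  set 𝓑 := 𝓛.filter fun L => L ⊆ L₀ ∧ i ∉ L ∧ #(Y ∩ L) ≤ #(X ∩ L)
  set B := 𝓑.sup id
  have hBL₀ : B ⊆ L₀ := Finset.sup_le fun L hL => (mem_filter.1 hL).2.1
  have hiB : i ∉ B := by
    simp only [B, mem_sup, id_eq, not_exists, not_and]
    exact fun L hL => (mem_filter.1 hL).2.2.1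
  have hYXB : #(Y ∩ B) ≤ #(X ∩ B) :=
    (h𝓛.subset (filter_subset _ _)).card_inter_sup_le fun L hL => (mem_filter.1 hL).2.2.2
  have hsplit (Z : Finset E) : #(Z ∩ (L₀ \ B)) + #(Z ∩ B) = #(Z ∩ L₀) := by
    rw [← inter_sdiff_assoc, ← card_sdiff_add_card_inter (Z ∩ L₀) B, inter_assoc,
      inter_eq_right.2 hBL₀]
  obtain ⟨j, hj⟩ := sdiff_nonempty_of_card_le_of_mem_sdiff (a := i)
    (show #(X ∩ (L₀ \ B)) ≤ #(Y ∩ (L₀ \ B)) by have := hsplit X; have := hsplit Y; omega)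
    (by simp [hiX, hiL₀, hiB, hiY])
  simp only [mem_sdiff, mem_inter, not_and] at hj
  obtain ⟨⟨hjY, hjL₀, hjB⟩, hjX⟩ := hj
  refine ⟨j, mem_sdiff.2 ⟨hjY, fun h => hjX h hjL₀ hjB⟩, fun L hL => ⟨fun hiL hjL => ?_,
    fun hjL hiL => ?_⟩⟩
  · have hLL₀ := h𝓛.subset_of_mem_inter_of_mem_sdiff hL hL₀𝓛 (mem_inter.2 ⟨hiL, hiL₀⟩)
      (mem_sdiff.2 ⟨hjL₀, hjL⟩)
    by_contra hXYL
    have := hL₀.eq_of_le (mem_filter.2 ⟨hL, hiL, not_lt.1 hXYL⟩) hLL₀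
    exact hjL (this ▸ hjL₀)
  · have hLL₀ := h𝓛.subset_of_mem_inter_of_mem_sdiff hL hL₀𝓛 (mem_inter.2 ⟨hjL, hjL₀⟩)
      (mem_sdiff.2 ⟨hiL₀, hiL⟩)
    by_contra hYXL
    exact hjB (le_sup (f := id) (mem_filter.2 ⟨hL, hLL₀, hiL, not_lt.1 hYXL⟩) hjL)

end Laminar

section CardInter

variable {E : Type*} [DecidableEq E] {g : ℕ → ℝ} {X Y L : Finset E} {i j : E}

theorem concave_card_inter_le_erase_insert
    (hg : ∀ k, g (k + 2) - g (k + 1) ≤ g (k + 1) - g k) (hiX : i ∈ X) (hiY : i ∉ Y)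
    (hL : i ∈ L → #(Y ∩ L) < #(X ∩ L)) :
    g #(X ∩ L) + g #(Y ∩ L) ≤ g #(X.erase i ∩ L) + g #(insert i Y ∩ L) := by
  by_cases hiL : i ∈ L
  · rw [erase_inter, insert_inter_of_mem hiL, card_erase_of_mem (mem_inter.2 ⟨hiX, hiL⟩),
      card_insert_of_notMem fun h => hiY (mem_inter.1 h).1]
    exact add_le_pred_add_succ_of_concave hg (hL hiL)
  · rw [erase_inter, insert_inter_of_notMem hiL,
      erase_eq_of_notMem fun h => hiL (mem_inter.1 h).2]

theorem concave_card_inter_le_exchange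
    (hg : ∀ k, g (k + 2) - g (k + 1) ≤ g (k + 1) - g k) (hiX : i ∈ X) (hiY : i ∉ Y)
    (hjY : j ∈ Y) (hjX : j ∉ X) (hi : i ∈ L → j ∉ L → #(Y ∩ L) < #(X ∩ L))
    (hj : j ∈ L → i ∉ L → #(X ∩ L) < #(Y ∩ L)) :
    g #(X ∩ L) + g #(Y ∩ L) ≤
      g #(insert j (X.erase i) ∩ L) + g #((insert i Y).erase j ∩ L) := by
  by_cases hjL : j ∈ L
  · by_cases hiL : i ∈ L
    · have hX : insert j (X.erase i) ∩ L = insert j ((X ∩ L).erase i) := by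
        rw [insert_inter_of_mem hjL, erase_inter]
      have hY : (insert i Y).erase j ∩ L = (insert i (Y ∩ L)).erase j := by
        rw [erase_inter, insert_inter_of_mem hiL]
      rw [hX, hY, card_insert_of_notMem (by simp [hjX]),
        card_erase_add_one (mem_inter.2 ⟨hiX, hiL⟩), card_erase_of_mem (by simp [hjY, hjL]),
        card_insert_of_notMem (by simp [hiY]), Nat.add_sub_cancel]
    · have hX : insert j (X.erase i) ∩ L = insert j X ∩ L := by
        rw [insert_inter_of_mem hjL, insert_inter_of_mem hjL, erase_inter,
          erase_eq_of_notMem fun h => hiL (mem_inter.1 h).2]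
      have hY : (insert i Y).erase j ∩ L = Y.erase j ∩ L := by
        rw [erase_inter, erase_inter, insert_inter_of_notMem hiL]
      rw [hX, hY, add_comm (g #(X ∩ L)), add_comm (g #(insert j X ∩ L))]
      exact concave_card_inter_le_erase_insert hg hjY hjX fun _ => hj hjL hiL
  · rw [insert_inter_of_notMem hjL, erase_inter j,
      erase_eq_of_notMem fun h => hjL (mem_inter.1 h).2]
    exact concave_card_inter_le_erase_insert hg hiX hiY (hi · hjL)

end CardInter

theorem laminar_concave_mconcave {E : Type*} [DecidableEq E]
    (𝓛 : Finset (Finset E)) (hlam : Laminar 𝓛) (φ : Finset E → ℕ → ℝ)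
    (hφ : ∀ L ∈ 𝓛, ∀ k : ℕ, φ L (k + 2) - φ L (k + 1) ≤ φ L (k + 1) - φ L k) :
    MConcave (fun X : Finset E => ∑ L ∈ 𝓛, φ L (X ∩ L).card) := by
  intro X Y i hi
  obtain ⟨hiX, hiY⟩ := mem_sdiff.1 hi
  simp only [← sum_add_distrib]
  by_cases hdrop : ∀ L ∈ 𝓛, i ∈ L → #(Y ∩ L) < #(X ∩ L)
  · exact Or.inl <| sum_le_sum fun L hL =>
      concave_card_inter_le_erase_insert (hφ L hL) hiX hiY (hdrop L hL)
  · push Not at hdrop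
    obtain ⟨j, hj, hjL⟩ := hlam.exists_exchange hiX hiY hdrop
    obtain ⟨hjY, hjX⟩ := mem_sdiff.1 hj
    exact Or.inr ⟨j, hj, sum_le_sum fun L hL =>
      concave_card_inter_le_exchange (hφ L hL) hiX hiY hjY hjX (hjL L hL).1 (hjL L hL).2⟩
end

section
/- The rank function r(X) = max{|I| : I ⊆ X, I independent} of a matroid is M♮-concave. -/
open Finset

/-!
Work in the matroid `M` on `E` whose independent finite sets are the given ones, so that the
function in question is the rank `eRk` on finite sets. If removing `i` does not lower the rank of
`X`, or adding `i` raises the rank of `Y`, the first alternative follows from monotonicity and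
`r(X) ≤ r(X - i) + 1`. Otherwise `i` lies in the closure of `Y`, hence in a circuit
`C ⊆ Y + i`, but not in the closure of `X - i`. As `i` is spanned by `C - i`, some `j ∈ C - i`
is not spanned by `X - i`: then `r(X - i + j) = r(X - i) + 1 ≥ r(X)`, while `j`, being spanned
by `C - j ⊆ Y + i - j`, gives `r(Y + i - j) ≥ r(Y)`.
-/

namespace Matroid

variable {α : Type*} {M : Matroid α} {X Y : Set α} {i : α}

lemma eRk_insert_eq_of_mem_closure (h : i ∈ M.closure X) : M.eRk (insert i X) = M.eRk X := by
  rw [← eRk_closure_eq, closure_insert_eq_of_mem_closure h, eRk_closure_eq]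

lemma eRk_le_eRk_sdiff_singleton_add_one (M : Matroid α) (X : Set α) (i : α) :
    M.eRk X ≤ M.eRk (X \ {i}) + 1 :=
  (M.eRk_mono (by simp [Set.insert_sdiff_singleton])).trans (M.eRk_insert_le_add_one i _)

lemma exists_exchange_of_mem_closure (hiY : i ∉ Y) (hclY : i ∈ M.closure Y)
    (hclX : i ∉ M.closure (X \ {i})) :
    ∃ j ∈ Y \ X, M.eRk (insert j (X \ {i})) = M.eRk (X \ {i}) + 1 ∧
      M.eRk Y ≤ M.eRk (insert i Y \ {j}) := by
  obtain ⟨C, hCY, hC, hiC⟩ := exists_isCircuit_of_mem_closure hclY hiY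
  have hC_not_spanned : ¬ C \ {i} ⊆ M.closure (X \ {i}) := fun h =>
    hclX (closure_subset_closure_of_subset_closure h (hC.mem_closure_sdiff_singleton_of_mem hiC))
  obtain ⟨j, ⟨hjC, hji⟩, hjX⟩ := Set.not_subset.1 hC_not_spanned
  have hjE : j ∈ M.E := hC.subset_ground hjC
  have hjY : j ∈ Y := (Set.mem_insert_iff.1 (hCY hjC)).resolve_left hji
  refine ⟨j, ⟨hjY, fun hjX' => hjX (M.mem_closure_of_mem' ⟨hjX', hji⟩)⟩,
    eRk_insert_eq_add_one ⟨hjE, hjX⟩, ?_⟩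
  have hj_spanned : j ∈ M.closure (insert i Y \ {j}) :=
    M.closure_subset_closure (Set.sdiff_subset_sdiff_left hCY)
      (hC.mem_closure_sdiff_singleton_of_mem hjC)
  calc M.eRk Y ≤ M.eRk (insert j (insert i Y \ {j})) :=
        M.eRk_mono (by
          rw [Set.insert_sdiff_singleton]
          exact (Set.subset_insert i Y).trans (Set.subset_insert j _))
    _ = M.eRk (insert i Y \ {j}) := eRk_insert_eq_of_mem_closure hj_spanned

theorem eRk_add_eRk_le_or_exists_exchange (M : Matroid α) (hiX : i ∈ X) (hiY : i ∉ Y) :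
    M.eRk X + M.eRk Y ≤ M.eRk (X \ {i}) + M.eRk (insert i Y) ∨
    ∃ j ∈ Y \ X, M.eRk X + M.eRk Y ≤ M.eRk (insert j (X \ {i})) + M.eRk (insert i Y \ {j}) := by
  have hX : M.eRk X = M.eRk (insert i (X \ {i})) := by rw [Set.insert_sdiff_self_of_mem hiX]
  have hY : M.eRk Y ≤ M.eRk (insert i Y) := M.eRk_mono (Set.subset_insert i Y)
  by_cases hiE : i ∈ M.E
  swap
  · left
    rw [hX, eRk_insert_of_notMem_ground _ hiE]
    gcongr
  by_cases hclX : i ∈ M.closure (X \ {i})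
  · left
    rw [hX, eRk_insert_eq_of_mem_closure hclX]
    gcongr
  by_cases hclY : i ∈ M.closure Y
  · right
    obtain ⟨j, hj, hXj, hYj⟩ := exists_exchange_of_mem_closure hiY hclY hclX
    refine ⟨j, hj, ?_⟩
    rw [hXj]
    exact add_le_add (M.eRk_le_eRk_sdiff_singleton_add_one X i) hYj
  · left
    rw [eRk_insert_eq_add_one ⟨hiE, hclY⟩, ← add_assoc, add_right_comm]
    gcongr
    exact M.eRk_le_eRk_sdiff_singleton_add_one X i

lemma eRk_coe_finset_eq_sup {Indep : Finset α → Prop} [DecidablePred Indep]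
    (hM : ∀ I : Finset α, M.Indep I ↔ Indep I) (X : Finset α) :
    M.eRk X = ((X.powerset.filter Indep).sup Finset.card : ℕ) := by
  refine le_antisymm (eRk_le_iff.2 fun I hIX hI => ?_) ?_
  · lift I to Finset α using X.finite_toSet.subset hIX
    rw [Set.encard_coe_eq_coe_finsetCard, Nat.cast_le]
    exact Finset.le_sup (Finset.mem_filter.2
      ⟨Finset.mem_powerset.2 (Finset.coe_subset.1 hIX), (hM I).1 hI⟩)
  · rw [Finset.apply_sup_eq_sup_comp_of_linearOrder _ Nat.mono_cast Nat.cast_zero]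
    refine Finset.sup_le fun I hI => ?_
    obtain ⟨hIX, hI⟩ := Finset.mem_filter.1 hI
    rw [Function.comp_apply, ← Set.encard_coe_eq_coe_finsetCard]
    exact ((hM I).2 hI).encard_le_eRk_of_subset (Finset.coe_subset.2 (Finset.mem_powerset.1 hIX))

end Matroid

theorem matroid_rank_mconcave {E : Type*} [DecidableEq E]
    (Indep : Finset E → Prop) [DecidablePred Indep]
    (hempty : Indep ∅)
    (hdown : ∀ I J : Finset E, J ⊆ I → Indep I → Indep J)
    (hexch : ∀ I J : Finset E, Indep I → Indep J → I.card < J.card →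
      ∃ i ∈ J \ I, Indep (insert i I)) :
    MConcave (fun X : Finset E =>
      (((X.powerset.filter Indep).sup Finset.card : ℕ) : ℝ)) := by
  let M : Matroid E := (IndepMatroid.ofFinset Set.univ Indep hempty
    (fun I J hJ hIJ => hdown J I hIJ hJ)
    (fun I J hI hJ hlt => by
      obtain ⟨e, he, hIe⟩ := hexch I J hI hJ hlt
      exact ⟨e, (mem_sdiff.1 he).1, (mem_sdiff.1 he).2, hIe⟩)
    (fun _ _ => Set.subset_univ _)).matroid
  have hrk : ∀ X : Finset E, M.eRk X = ((X.powerset.filter Indep).sup Finset.card : ℕ) :=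
    Matroid.eRk_coe_finset_eq_sup fun I => by simp [M]
  intro X Y i hi
  dsimp only
  obtain ⟨hiX, hiY⟩ := mem_sdiff.1 hi
  have key := M.eRk_add_eRk_le_or_exists_exchange (X := X) (Y := Y) hiX hiY
  simp only [← coe_erase, ← coe_insert, hrk] at key
  rcases key with h | ⟨j, hj, h⟩
  · exact Or.inl (by exact_mod_cast h)
  · exact Or.inr ⟨j, by simpa using hj, by exact_mod_cast h⟩
end

section
/- The weighted matroid rank function f(X) = max{Σ_{e∈I} w(e) : I ⊆ X, I independent}, for a nonnegative weight vector w, is M♮-concave. -/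
/-!
Let `A ⊆ X` and `B ⊆ Y` be independent sets of maximum weight. If `i ∉ A`, or if `B + i` is
independent, then `(A, B)` resp. `(A - i, B + i)` already witnesses the first alternative.
Otherwise `i` closes a circuit in `B + i`, and the circuit yields `j ∈ B \ A` such that both
`A - i + j` and `B - j + i` are independent. This pair has the same total weight as `(A, B)` and
lies in `(X - i + j, Y + i - j)`, or in `(X - i, Y + i)` when `j ∈ X`.
-/

open Finset

namespace Matroid

variable {α : Type*} {M : Matroid α} {A B : Set α} {i : α}

lemma Indep.exists_exchange_of_not_indep_insert (hA : M.Indep A) (hB : M.Indep B) (hiA : i ∈ A)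
    (hiB : ¬ M.Indep (insert i B)) :
    ∃ j ∈ B \ A, M.Indep (insert j (A \ {i})) ∧ M.Indep (insert i (B \ {j})) := by
  have hiB' : i ∉ B := fun h => hiB (by rwa [Set.insert_eq_of_mem h])
  have hicl : i ∈ M.closure B := by
    by_contra h
    exact hiB (hB.insert_indep_iff_of_notMem hiB' |>.2 ⟨hA.subset_ground hiA, h⟩)
  set C := M.fundCircuit i B
  have hC : M.IsCircuit C := hB.fundCircuit_isCircuit hicl hiB'
  obtain ⟨j, ⟨hjC, hji⟩, hjA, hAj⟩ :
      ∃ j ∈ C \ {i}, j ∉ A ∧ M.Indep (insert j (A \ {i})) := by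
    by_contra! h
    -- otherwise `i ∈ cl (C - i) ⊆ cl (A - i)`, contradicting the independence of `A`
    have hCA : C \ {i} ⊆ M.closure (A \ {i}) := fun j hj =>
      (hA.sdiff {i}).mem_closure_iff'.2
        ⟨hC.subset_ground hj.1, fun hind => ⟨not_not.1 fun hjA => h j hj hjA hind, hj.2⟩⟩
    exact hA.notMem_closure_sdiff_of_mem hiA <| M.closure_subset_closure_of_subset_closure hCA
      (hC.mem_closure_sdiff_singleton_of_mem (M.mem_fundCircuit i B))
  have hjB : j ∈ B :=
    (Set.mem_insert_iff.1 (M.fundCircuit_subset_insert i B hjC)).resolve_left hji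
  refine ⟨j, ⟨hjB, hjA⟩, hAj, ?_⟩
  rw [Set.insert_sdiff_singleton_comm (Ne.symm hji)]
  exact (hB.mem_fundCircuit_iff hicl hiB').1 hjC

end Matroid

lemma Finset.sum_insert_erase_add_sum_insert_erase {α M : Type*} [DecidableEq α]
    [AddCommMonoid M] (f : α → M) {A B : Finset α} {i j : α} (hiA : i ∈ A) (hiB : i ∉ B)
    (hjB : j ∈ B) (hjA : j ∉ A) :
    ∑ x ∈ insert j (A.erase i), f x + ∑ x ∈ insert i (B.erase j), f x =
      ∑ x ∈ A, f x + ∑ x ∈ B, f x := by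
  rw [sum_insert (fun h => hjA (mem_of_mem_erase h)),
    sum_insert (fun h => hiB (mem_of_mem_erase h)), ← sum_erase_add A f hiA,
    ← sum_erase_add B f hjB]
  abel

lemma exists_exchange_of_not_indep_insert {E : Type*} [DecidableEq E] {Indep : Finset E → Prop}
    (hempty : Indep ∅)
    (hdown : ∀ I J : Finset E, J ⊆ I → Indep I → Indep J)
    (hexch : ∀ I J : Finset E, Indep I → Indep J → I.card < J.card →
      ∃ i ∈ J \ I, Indep (insert i I))
    {A B : Finset E} {i : E} (hA : Indep A) (hB : Indep B) (hiA : i ∈ A)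
    (hiB : ¬ Indep (insert i B)) :
    ∃ j ∈ B \ A, Indep (insert j (A.erase i)) ∧ Indep (insert i (B.erase j)) := by
  let M := (IndepMatroid.ofFinset Set.univ Indep hempty (fun I J hJ hIJ => hdown J I hIJ hJ)
    (fun I J hI hJ hIJ => by
      obtain ⟨e, he, hind⟩ := hexch I J hI hJ hIJ
      exact ⟨e, (mem_sdiff.1 he).1, (mem_sdiff.1 he).2, hind⟩)
    (fun _ _ => Set.subset_univ _)).matroid
  have hM (I : Finset E) : M.Indep I ↔ Indep I := by simp [M]
  obtain ⟨j, hj, hAj, hBj⟩ :=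
    ((hM A).2 hA).exists_exchange_of_not_indep_insert ((hM B).2 hB) hiA
      (by rwa [← coe_insert, hM])
  refine ⟨j, by simpa using hj, (hM _).1 ?_, (hM _).1 ?_⟩ <;> simpa

section WeightedRank

variable {E : Type*} {Indep : Finset E → Prop} [DecidablePred Indep]

variable (Indep) in
def weightedRank (hempty : Indep ∅) (w : E → ℝ) (X : Finset E) : ℝ :=
  (X.powerset.filter Indep).sup'
    ⟨∅, mem_filter.2 ⟨mem_powerset.2 (empty_subset X), hempty⟩⟩
    (fun I => ∑ e ∈ I, w e)

variable (hempty : Indep ∅) (w : E → ℝ)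

lemma sum_le_weightedRank {I X : Finset E} (hIX : I ⊆ X) (hI : Indep I) :
    ∑ e ∈ I, w e ≤ weightedRank Indep hempty w X :=
  le_sup' (fun I => ∑ e ∈ I, w e) (mem_filter.2 ⟨mem_powerset.2 hIX, hI⟩)

lemma exists_weightedRank_eq (X : Finset E) :
    ∃ A ⊆ X, Indep A ∧ weightedRank Indep hempty w X = ∑ e ∈ A, w e := by
  obtain ⟨A, hA, hXA⟩ := exists_mem_eq_sup' _ (fun I => ∑ e ∈ I, w e)
    (s := X.powerset.filter Indep)
  exact ⟨A, mem_powerset.1 (mem_filter.1 hA).1, (mem_filter.1 hA).2, hXA⟩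

variable {hempty w} in
lemma weightedRank_add_le {X Y X' Y' A B A' B' : Finset E}
    (hXA : weightedRank Indep hempty w X = ∑ e ∈ A, w e)
    (hYB : weightedRank Indep hempty w Y = ∑ e ∈ B, w e)
    (hA'X' : A' ⊆ X') (hA' : Indep A') (hB'Y' : B' ⊆ Y') (hB' : Indep B')
    (hsum : ∑ e ∈ A', w e + ∑ e ∈ B', w e = ∑ e ∈ A, w e + ∑ e ∈ B, w e) :
    weightedRank Indep hempty w X + weightedRank Indep hempty w Y ≤
      weightedRank Indep hempty w X' + weightedRank Indep hempty w Y' := by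
  rw [hXA, hYB, ← hsum]
  exact add_le_add (sum_le_weightedRank hempty w hA'X' hA') (sum_le_weightedRank hempty w hB'Y' hB')

end WeightedRank

theorem weighted_matroid_rank_mconcave_general {E : Type*} [DecidableEq E]
    (Indep : Finset E → Prop) [DecidablePred Indep]
    (hempty : Indep ∅)
    (hdown : ∀ I J : Finset E, J ⊆ I → Indep I → Indep J)
    (hexch : ∀ I J : Finset E, Indep I → Indep J → I.card < J.card →
      ∃ i ∈ J \ I, Indep (insert i I))
    (w : E → ℝ) :
    MConcave (fun X : Finset E =>
      (X.powerset.filter Indep).sup'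
        ⟨∅, Finset.mem_filter.mpr ⟨Finset.mem_powerset.mpr (Finset.empty_subset X), hempty⟩⟩
        (fun I => ∑ e ∈ I, w e)) := by
  change MConcave (weightedRank Indep hempty w)
  intro X Y i hi
  have hiY : i ∉ Y := (mem_sdiff.1 hi).2
  obtain ⟨A, hAX, hA, hXA⟩ := exists_weightedRank_eq hempty w X
  obtain ⟨B, hBY, hB, hYB⟩ := exists_weightedRank_eq hempty w Y
  have hiB : i ∉ B := fun h => hiY (hBY h)
  by_cases hiA : i ∈ A
  case neg =>
    exact .inl <| weightedRank_add_le hXA hYB (subset_erase.2 ⟨hAX, hiA⟩) hA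
      (hBY.trans (subset_insert i Y)) hB rfl
  have hA'X : A.erase i ⊆ X.erase i := erase_subset_erase i hAX
  by_cases hBi : Indep (insert i B)
  · refine .inl <| weightedRank_add_le hXA hYB hA'X (hdown _ _ (erase_subset i A) hA)
      (insert_subset_insert i hBY) hBi ?_
    rw [sum_insert hiB, ← sum_erase_add A w hiA]
    ring
  obtain ⟨j, hj, hAj, hBj⟩ :=
    exists_exchange_of_not_indep_insert hempty hdown hexch hA hB hiA hBi
  obtain ⟨hjB, hjA⟩ := mem_sdiff.1 hj
  have hji : j ≠ i := fun h => hiY (h ▸ hBY hjB)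
  have hsum := sum_insert_erase_add_sum_insert_erase w hiA hiB hjB hjA
  have hB'Y : B.erase j ⊆ Y.erase j := erase_subset_erase j hBY
  by_cases hjX : j ∈ X
  · exact .inl <| weightedRank_add_le hXA hYB (insert_subset (mem_erase.2 ⟨hji, hjX⟩) hA'X) hAj
      (insert_subset_insert i (hB'Y.trans (erase_subset j Y))) hBj hsum
  · refine .inr ⟨j, mem_sdiff.2 ⟨hBY hjB, hjX⟩, weightedRank_add_le hXA hYB
      (insert_subset_insert j hA'X) hAj ?_ hBj hsum⟩
    rw [erase_insert_of_ne hji.symm]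
    exact insert_subset_insert i hB'Y

theorem weighted_matroid_rank_mconcave {E : Type*} [DecidableEq E]
    (Indep : Finset E → Prop) [DecidablePred Indep]
    (hempty : Indep ∅)
    (hdown : ∀ I J : Finset E, J ⊆ I → Indep I → Indep J)
    (hexch : ∀ I J : Finset E, Indep I → Indep J → I.card < J.card →
      ∃ i ∈ J \ I, Indep (insert i I))
    (w : E → ℝ) (hw : ∀ e, 0 ≤ w e) :
    MConcave (fun X : Finset E =>
      (X.powerset.filter Indep).sup'
        ⟨∅, Finset.mem_filter.mpr ⟨Finset.mem_powerset.mpr (Finset.empty_subset X), hempty⟩⟩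
        (fun I => ∑ e ∈ I, w e)) :=
  weighted_matroid_rank_mconcave_general Indep hempty hdown hexch w
end

section
/- Let A ∈ ℝ^{E×E} be a symmetric matrix of the form A = Σ_{L∈L} λ_L 1_L 1_L^T + Diag(d) for a laminar family L, coefficients λ_L ≤ 0, and d ∈ ℝ^E. Then A_{ij} ≤ 0 for all distinct i,j, and A_{ij} ≤ max{A_{ik}, A_{jk}} for all distinct i,j,k. -/
open Finset

/-!
Off the diagonal, `A i j` is the total weight of the members of `𝓛` containing both `i` and `j`.
All weights are nonpositive, so this is antitone in the set of such members. For distinct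
`i, j, k`, laminarity forces every member containing `{i, k}` to contain `j`, or every member
containing `{j, k}` to contain `i`: two members witnessing the opposite would share `k` without
being nested.
-/

section Laminar

variable {E : Type*} [DecidableEq E]

def commonMembers (𝓛 : Finset (Finset E)) (i j : E) : Finset (Finset E) :=
  {L ∈ 𝓛 | i ∈ L ∧ j ∈ L}

theorem sum_mul_ite_mem_mul_ite_mem {R : Type*} [NonAssocSemiring R]
    (𝓛 : Finset (Finset E)) (lam : Finset E → R) (i j : E) :
    ∑ L ∈ 𝓛, lam L * (if i ∈ L then 1 else 0) * (if j ∈ L then 1 else 0) =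
      ∑ L ∈ commonMembers 𝓛 i j, lam L := by
  rw [commonMembers, sum_filter]
  refine sum_congr rfl fun L _ => ?_
  by_cases hi : i ∈ L <;> by_cases hj : j ∈ L <;> simp [hi, hj]

theorem Laminar.commonMembers_subset_or {𝓛 : Finset (Finset E)} (hlam : Laminar 𝓛)
    (i j k : E) :
    commonMembers 𝓛 i k ⊆ commonMembers 𝓛 i j ∨ commonMembers 𝓛 j k ⊆ commonMembers 𝓛 i j := by
  by_contra! ⟨hik, hjk⟩
  obtain ⟨L, hL, hLij⟩ := not_subset.mp hik
  obtain ⟨M, hM, hMij⟩ := not_subset.mp hjk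
  simp only [commonMembers, mem_filter] at hL hM hLij hMij
  have hjL : j ∉ L := fun hj => hLij ⟨hL.1, hL.2.1, hj⟩
  have hiM : i ∉ M := fun hi => hMij ⟨hM.1, hi, hM.2.1⟩
  rcases hlam L hL.1 M hM.1 with hLM | hML | hdisj
  · exact hiM (hLM hL.2.1)
  · exact hjL (hML hM.2.1)
  · exact notMem_empty k (hdisj ▸ mem_inter.mpr ⟨hL.2.2, hM.2.2⟩)

end Laminar

theorem laminar_form_ultrametric_general {E : Type*} [DecidableEq E]
    (𝓛 : Finset (Finset E)) (hlam : Laminar 𝓛)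
    (lam : Finset E → ℝ) (hneg : ∀ L ∈ 𝓛, lam L ≤ 0) (d : E → ℝ)
    (A : E → E → ℝ)
    (hA : ∀ i j : E, A i j =
      (∑ L ∈ 𝓛, lam L * (if i ∈ L then 1 else 0) * (if j ∈ L then 1 else 0)) +
      (if i = j then d i else 0)) :
    (∀ i j : E, i ≠ j → A i j ≤ 0) ∧
    (∀ i j k : E, i ≠ j → j ≠ k → i ≠ k → A i j ≤ max (A i k) (A j k)) := by
  have hA_off : ∀ i j, i ≠ j → A i j = ∑ L ∈ commonMembers 𝓛 i j, lam L := fun i j hij => by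
    rw [hA, if_neg hij, add_zero, sum_mul_ite_mem_mul_ite_mem]
  have hcommon : ∀ i j, ∀ L ∈ commonMembers 𝓛 i j, lam L ≤ 0 :=
    fun _ _ L hL => hneg L (mem_filter.mp hL).1
  refine ⟨fun i j hij => hA_off i j hij ▸ sum_nonpos (hcommon i j), fun i j k hij hjk hik => ?_⟩
  rw [hA_off i j hij, hA_off i k hik, hA_off j k hjk]
  rcases hlam.commonMembers_subset_or i j k with h | h
  · exact le_max_of_le_left (sum_le_sum_of_subset_of_nonpos' h fun L hL _ => hcommon i j L hL)
  · exact le_max_of_le_right (sum_le_sum_of_subset_of_nonpos' h fun L hL _ => hcommon i j L hL)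

theorem laminar_form_ultrametric {E : Type*} [DecidableEq E] [Fintype E]
    (𝓛 : Finset (Finset E)) (hlam : Laminar 𝓛)
    (lam : Finset E → ℝ) (hneg : ∀ L ∈ 𝓛, lam L ≤ 0) (d : E → ℝ)
    (A : E → E → ℝ)
    (hA : ∀ i j : E, A i j =
      (∑ L ∈ 𝓛, lam L * (if i ∈ L then 1 else 0) * (if j ∈ L then 1 else 0)) +
      (if i = j then d i else 0)) :
    (∀ i j : E, i ≠ j → A i j ≤ 0) ∧
    (∀ i j k : E, i ≠ j → j ≠ k → i ≠ k → A i j ≤ max (A i k) (A j k)) :=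
  laminar_form_ultrametric_general 𝓛 hlam lam hneg d A hA
end

section
/- Let A ∈ ℝ^{E×E} be symmetric with A_{ij} ≤ 0 for distinct i,j and A_{ij} ≤ max{A_{ik}, A_{jk}} for distinct i,j,k. Then there exist a laminar family L on E, coefficients λ_L ≤ 0 (L ∈ L), and d ∈ ℝ^E such that A = Σ_{L∈L} λ_L 1_L 1_L^T + Diag(d). -/
/-!
For a threshold `t`, the relation `i = j ∨ A i j ≤ t` is an equivalence relation by the
ultrametric inequality; its classes (the clusters at level `t`) over all thresholds form a
laminar family, since clusters at a lower level refine those at a higher one. Over the finite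
set `T` of off-diagonal values, every `v ∈ T` telescopes as `v = ∑_{t ∈ T, v ≤ t} w t` with
`w t = t - (the next value of T above t, or 0)` nonpositive. Hence for `i ≠ j`,
`A i j = ∑_{t ∈ T} w t [i, j lie in a common cluster at level t]`, which regroups into
`∑_L λ_L 1_L(i) 1_L(j)`; the diagonal is absorbed by `d`.
-/

open Finset

lemma exists_layer_weights (T : Finset ℝ) (hT : ∀ t ∈ T, t ≤ 0) :
    ∃ w : ℝ → ℝ, (∀ t ∈ T, w t ≤ 0) ∧ ∀ v ∈ T, ∑ t ∈ T with v ≤ t, w t = v := by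
  induction T using Finset.induction_on_min with
  | empty => exact ⟨0, by simp, by simp⟩
  | insert a s has ih =>
    obtain ⟨w, hw_nonpos, hw_sum⟩ := ih fun t ht => hT t (mem_insert_of_mem ht)
    have ha : a ∉ s := fun h => lt_irrefl a (has a h)
    have hw_eq : ∀ t ∈ s, Function.update w a (a - ∑ t ∈ s, w t) t = w t :=
      fun t ht => Function.update_of_ne (has t ht).ne' _ _
    -- `∑ t ∈ s, w t` is `min s` (or `0` for `s = ∅`), so the new minimum gets weight `a - min s`
    have ha_le : a ≤ ∑ t ∈ s, w t := by
      rcases s.eq_empty_or_nonempty with rfl | hs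
      · simpa using hT a (mem_insert_self a ∅)
      · have hmin := hw_sum (s.min' hs) (s.min'_mem hs)
        rw [filter_true_of_mem fun t ht => s.min'_le t ht] at hmin
        exact hmin ▸ (has _ (s.min'_mem hs)).le
    refine ⟨Function.update w a (a - ∑ t ∈ s, w t), ?_, ?_⟩
    · intro t ht
      rcases mem_insert.1 ht with rfl | ht
      · rw [Function.update_self]
        linarith
      · rw [hw_eq t ht]
        exact hw_nonpos t ht
    · intro v hv
      rcases mem_insert.1 hv with rfl | hv
      · rw [filter_true_of_mem fun t ht => ?_, sum_insert ha, Function.update_self,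
          sum_congr rfl hw_eq, sub_add_cancel]
        rcases mem_insert.1 ht with rfl | ht
        exacts [le_rfl, (has t ht).le]
      · rw [filter_insert, if_neg (not_le.2 (has v hv)), sum_congr rfl fun t ht =>
          hw_eq t (mem_filter.1 ht).1, hw_sum v hv]

section Cluster

variable {E : Type*} [DecidableEq E] [Fintype E] {A : E → E → ℝ} {t s : ℝ} {i j k : E}

variable (A) in
noncomputable def cluster (t : ℝ) (i : E) : Finset E := {j | i = j ∨ A i j ≤ t}

lemma mem_cluster : j ∈ cluster A t i ↔ i = j ∨ A i j ≤ t := by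
  simp [cluster]

lemma self_mem_cluster : i ∈ cluster A t i :=
  mem_cluster.2 (Or.inl rfl)

lemma mem_cluster_of_ne (hij : i ≠ j) : j ∈ cluster A t i ↔ A i j ≤ t := by
  simp [mem_cluster, hij]

lemma cluster_mono (hts : t ≤ s) : cluster A t i ⊆ cluster A s i := fun _ hj =>
  mem_cluster.2 ((mem_cluster.1 hj).imp_right fun h => h.trans hts)

lemma mem_cluster_comm (hsymm : ∀ i j : E, A i j = A j i) :
    j ∈ cluster A t i ↔ i ∈ cluster A t j := by
  simp only [mem_cluster, eq_comm, hsymm i j]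

variable (hsymm : ∀ i j : E, A i j = A j i)
  (hum : ∀ i j k : E, i ≠ j → j ≠ k → i ≠ k → A i j ≤ max (A i k) (A j k))
include hsymm hum

lemma mem_cluster_trans (hij : j ∈ cluster A t i) (hjk : k ∈ cluster A t j) :
    k ∈ cluster A t i := by
  by_cases hik : i = k
  · exact hik ▸ self_mem_cluster
  by_cases hij' : i = j
  · exact hij' ▸ hjk
  by_cases hjk' : j = k
  · exact hjk' ▸ hij
  rw [mem_cluster_of_ne hij'] at hij
  rw [mem_cluster_of_ne hjk'] at hjk
  refine (mem_cluster_of_ne hik).2 ?_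
  calc A i k ≤ max (A i j) (A k j) := hum i k j hik (Ne.symm hjk') hij'
    _ ≤ t := max_le hij (hsymm k j ▸ hjk)

lemma cluster_eq_of_mem (hij : j ∈ cluster A t i) : cluster A t j = cluster A t i := by
  ext k
  exact ⟨mem_cluster_trans hsymm hum hij,
    mem_cluster_trans hsymm hum ((mem_cluster_comm hsymm).1 hij)⟩

lemma cluster_subset_of_mem_of_mem (hts : t ≤ s) (hi : k ∈ cluster A t i) (hj : k ∈ cluster A s j) :
    cluster A t i ⊆ cluster A s j :=
  calc cluster A t i = cluster A t k := (cluster_eq_of_mem hsymm hum hi).symm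
    _ ⊆ cluster A s k := cluster_mono hts
    _ = cluster A s j := cluster_eq_of_mem hsymm hum hj

lemma laminar_biUnion_clusters (T : Finset ℝ) :
    Laminar (T.biUnion fun t => univ.image (cluster A t)) := by
  intro X hX Y hY
  simp only [mem_biUnion, mem_image, mem_univ, true_and] at hX hY
  obtain ⟨t, -, i, rfl⟩ := hX
  obtain ⟨s, -, j, rfl⟩ := hY
  rcases (cluster A t i ∩ cluster A s j).eq_empty_or_nonempty with h | ⟨k, hk⟩
  · exact Or.inr (Or.inr h)
  rw [mem_inter] at hk
  rcases le_total t s with hts | hst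
  · exact Or.inl (cluster_subset_of_mem_of_mem hsymm hum hts hk.1 hk.2)
  · exact Or.inr (Or.inl (cluster_subset_of_mem_of_mem hsymm hum hst hk.2 hk.1))

lemma sum_clusters_indicator_mul_indicator :
    ∑ L ∈ univ.image (cluster A t),
      (if i ∈ L then (1 : ℝ) else 0) * (if j ∈ L then 1 else 0) =
      if j ∈ cluster A t i then 1 else 0 := by
  rw [sum_eq_single_of_mem (cluster A t i) (mem_image_of_mem _ (mem_univ i)),
    if_pos self_mem_cluster, one_mul]
  simp only [mem_image, mem_univ, true_and]
  rintro _ ⟨k, rfl⟩ hne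
  rw [if_neg fun hi => hne (cluster_eq_of_mem hsymm hum hi).symm, zero_mul]

lemma sum_biUnion_clusters_weight_mul (T : Finset ℝ) (w : ℝ → ℝ) (i j : E) :
    ∑ L ∈ T.biUnion (fun t => univ.image (cluster A t)),
      (∑ t ∈ T with L ∈ univ.image (cluster A t), w t) *
        (if i ∈ L then 1 else 0) * (if j ∈ L then 1 else 0) =
      ∑ t ∈ T, w t * if j ∈ cluster A t i then 1 else 0 := by
  simp_rw [sum_mul, ← sum_clusters_indicator_mul_indicator hsymm hum, mul_sum, ← mul_assoc]
  refine (sum_comm' fun t L => ?_).symm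
  simp only [mem_filter, mem_biUnion]
  exact ⟨fun h => ⟨⟨h.1, h.2⟩, t, h⟩, fun h => h.1⟩

end Cluster

theorem ultrametric_laminar_form {E : Type*} [DecidableEq E] [Fintype E]
    (A : E → E → ℝ) (hsymm : ∀ i j : E, A i j = A j i)
    (hnp : ∀ i j : E, i ≠ j → A i j ≤ 0)
    (hum : ∀ i j k : E, i ≠ j → j ≠ k → i ≠ k → A i j ≤ max (A i k) (A j k)) :
    ∃ (𝓛 : Finset (Finset E)) (lam : Finset E → ℝ) (d : E → ℝ),
      Laminar 𝓛 ∧ (∀ L ∈ 𝓛, lam L ≤ 0) ∧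
      ∀ i j : E, A i j =
        (∑ L ∈ 𝓛, lam L * (if i ∈ L then 1 else 0) * (if j ∈ L then 1 else 0)) +
        (if i = j then d i else 0) := by
  set T : Finset ℝ := univ.offDiag.image fun p : E × E => A p.1 p.2
  have hT : ∀ i j, i ≠ j → A i j ∈ T := fun i j hij =>
    mem_image.2 ⟨(i, j), by simpa using hij, rfl⟩
  obtain ⟨w, hw_nonpos, hw_sum⟩ := exists_layer_weights T <| by
    simpa [T] using fun _ i j hij h => h ▸ hnp i j hij
  set 𝓛 := T.biUnion fun t => univ.image (cluster A t)
  set lam : Finset E → ℝ := fun L => ∑ t ∈ T with L ∈ univ.image (cluster A t), w t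
  have h_off : ∀ i j, i ≠ j →
      ∑ L ∈ 𝓛, lam L * (if i ∈ L then 1 else 0) * (if j ∈ L then 1 else 0) = A i j := by
    intro i j hij
    rw [sum_biUnion_clusters_weight_mul hsymm hum, ← hw_sum _ (hT i j hij), sum_filter]
    simp [mem_cluster_of_ne hij]
  refine ⟨𝓛, lam, fun i => A i i -
    ∑ L ∈ 𝓛, lam L * (if i ∈ L then 1 else 0) * (if i ∈ L then 1 else 0),
    laminar_biUnion_clusters hsymm hum T,
    fun L _ => sum_nonpos fun t ht => hw_nonpos t (mem_filter.1 ht).1, fun i j => ?_⟩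
  by_cases hij : i = j
  · subst hij
    simp
  · rw [if_neg hij, add_zero, h_off i j hij]
end

section
/- Let f: 2^E → ℝ be a set function and A ∈ ℝ^{E×E} symmetric. Suppose Hess_f(X)_{ij} ≤ A_{ij} ≤ 0 for all distinct i,j and all X ⊆ E∖{i,j}, and set A_{ii} := 2f(i | E∖{i}) - 2Σ_{k≠i} A_{ik}. Then for every i ∈ E, min over X ⊆ E∖{i} of [f(i | X) - Σ_{k∈X} A_{ik}] is attained at X = E∖{i}; consequently Σ_{k∈X} A_{ik} + A_{ii}/2 ≤ f(i | X) for all i ∈ E and X ⊆ E∖{i}. -/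
/-!
Since `Hess_f(X)_{ij} = f(i | X ∪ {j}) - f(i | X)`, the bound `Hess_f(X)_{ij} ≤ A_{ij}` says
exactly that `X ↦ f(i | X) - ∑_{k ∈ X} A_{ik}` does not increase when one element `j ≠ i` is
added to `X`. Hence it is antitone on subsets of `E ∖ {i}` and minimal at `E ∖ {i}`; the second
claim is this minimality rewritten with the definition of `A_{ii}`.
-/

open Finset

def discreteHess {E : Type*} [DecidableEq E] (f : Finset E → ℝ)
    (X : Finset E) (i j : E) : ℝ :=
  f (insert i (insert j X)) + f X - f (insert i X) - f (insert j X)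

def marginalGain {E : Type*} [DecidableEq E] (f : Finset E → ℝ) (i : E) (X : Finset E) : ℝ :=
  f (insert i X) - f X

lemma Finset.antitone_comp_erase {α β : Type*} [DecidableEq α] [Preorder β]
    {g : Finset α → β} (a : α)
    (hg : ∀ s, a ∉ s → ∀ b ≠ a, b ∉ s → g (insert b s) ≤ g s) :
    Antitone fun s : Finset α => g (s.erase a) := by
  refine antitone_iff_forall_insert_le.mpr fun s b hb => ?_
  by_cases hba : b = a
  · simp only [hba, erase_insert_eq_erase, le_refl]
  · rw [erase_insert_of_ne hba]
    exact hg _ (notMem_erase a s) b hba fun h => hb (mem_of_mem_erase h)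

lemma discreteHess_eq_sub_marginalGain {E : Type*} [DecidableEq E] (f : Finset E → ℝ)
    (X : Finset E) (i j : E) :
    discreteHess f X i j = marginalGain f i (insert j X) - marginalGain f i X := by
  unfold discreteHess marginalGain
  ring

lemma marginalGain_sub_sum_le_of_subset {E : Type*} [DecidableEq E] (f : Finset E → ℝ)
    (A : E → E → ℝ) (i : E)
    (hA : ∀ j ≠ i, ∀ X : Finset E, i ∉ X → j ∉ X → discreteHess f X i j ≤ A i j)
    {X Y : Finset E} (hXY : X ⊆ Y) (hiY : i ∉ Y) :
    marginalGain f i Y - ∑ k ∈ Y, A i k ≤ marginalGain f i X - ∑ k ∈ X, A i k := by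
  have hanti := Finset.antitone_comp_erase (g := fun X => marginalGain f i X - ∑ k ∈ X, A i k) i
    fun X hiX j hji hjX => by
      have hHess := hA j hji X hiX hjX
      rw [discreteHess_eq_sub_marginalGain] at hHess
      rw [sum_insert hjX]
      linarith
  simpa only [erase_eq_of_notMem hiY, erase_eq_of_notMem fun h => hiY (hXY h)] using hanti hXY

theorem monotonicity_from_hessian_bounds_general {E : Type*} [DecidableEq E] [Fintype E]
    (f : Finset E → ℝ) (A : E → E → ℝ)
    (hbound : ∀ i j : E, i ≠ j → ∀ X : Finset E, X ⊆ (univ.erase i).erase j →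
      discreteHess f X i j ≤ A i j ∧ A i j ≤ 0)
    (hdiag : ∀ i : E,
      A i i = 2 * (f univ - f (univ.erase i)) - 2 * ∑ k ∈ univ.erase i, A i k) :
    ∀ i : E, ∀ X : Finset E, X ⊆ univ.erase i →
      ((f univ - f (univ.erase i)) - ∑ k ∈ univ.erase i, A i k ≤
        (f (insert i X) - f X) - ∑ k ∈ X, A i k) ∧
      (∑ k ∈ X, A i k + A i i / 2 ≤ f (insert i X) - f X) := by
  intro i X hX
  have hHess : ∀ j ≠ i, ∀ Y : Finset E, i ∉ Y → j ∉ Y → discreteHess f Y i j ≤ A i j :=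
    fun j hji Y hiY hjY => (hbound i j hji.symm Y fun k hk => by
      simp only [mem_erase, mem_univ, and_true]
      exact ⟨fun h => hjY (h ▸ hk), fun h => hiY (h ▸ hk)⟩).1
  have hmin := marginalGain_sub_sum_le_of_subset f A i hHess hX (notMem_erase i univ)
  rw [marginalGain, marginalGain, insert_erase (mem_univ i)] at hmin
  exact ⟨hmin, by rw [hdiag i]; linarith⟩

theorem monotonicity_from_hessian_bounds {E : Type*} [DecidableEq E] [Fintype E]
    (f : Finset E → ℝ) (A : E → E → ℝ) (hsymm : ∀ i j : E, A i j = A j i)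
    (hbound : ∀ i j : E, i ≠ j → ∀ X : Finset E, X ⊆ (univ.erase i).erase j →
      discreteHess f X i j ≤ A i j ∧ A i j ≤ 0)
    (hdiag : ∀ i : E,
      A i i = 2 * (f univ - f (univ.erase i)) - 2 * ∑ k ∈ univ.erase i, A i k) :
    ∀ i : E, ∀ X : Finset E, X ⊆ univ.erase i →
      ((f univ - f (univ.erase i)) - ∑ k ∈ univ.erase i, A i k ≤
        (f (insert i X) - f X) - ∑ k ∈ X, A i k) ∧
      (∑ k ∈ X, A i k + A i i / 2 ≤ f (insert i X) - f X) :=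
  monotonicity_from_hessian_bounds_general f A hbound hdiag
end
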